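/- Let n ≥ 3 and let A be a primitive (0,1) companion matrix of order n with zero trace. Let ℓ_1 < ℓ_2 < ... < ℓ_z be the distinct lengths of elementary cycles in D(A). Then exp(A:1,1) = n + F(ℓ_1,...,ℓ_z), where F(ℓ_1,...,ℓ_z) is the Frobenius number: the smallest integer x such that every integer ≥ x is a nonnegative integer combination of ℓ_1,...,ℓ_z. -/

import Mathlib

open Matrix BigOperators

/-- A nonnegative square matrix is primitive if some positive power has all entries positive. -/
def IsPrimitive {n : ℕ} (A : Matrix (Fin n) (Fin n) ℝ) : Prop :=
  ∃ m : ℕ, 0 < m ∧ ∀ i j, 0 < (A ^ m) i j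

/-- The exponent of a primitive matrix: the least positive `m` with `A ^ m > 0`. -/
noncomputable def matExp {n : ℕ} (A : Matrix (Fin n) (Fin n) ℝ) : ℕ :=
  sInf {m : ℕ | 0 < m ∧ ∀ i j, 0 < (A ^ m) i j}

/-- `(0,1)` companion matrix: superdiagonal ones on the first `n-1` rows,
arbitrary `(0,1)` last row, all other entries zero. -/
def IsCompanion {n : ℕ} (A : Matrix (Fin n) (Fin n) ℝ) : Prop :=
  (∀ i j, A i j = 0 ∨ A i j = 1) ∧
  (∀ i j : Fin n, (i : ℕ) + 1 < n → (A i j = 1 ↔ (j : ℕ) = (i : ℕ) + 1))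

/-- `exp(A:i,j)`: least positive `k` such that `(A^l) i j > 0` for all `l ≥ k`. -/
noncomputable def expIJ {n : ℕ} (A : Matrix (Fin n) (Fin n) ℝ) (i j : Fin n) : ℕ :=
  sInf {k : ℕ | 0 < k ∧ ∀ l, k ≤ l → 0 < (A ^ l) i j}

/-- `exp(A:i)`: least positive `p` such that every entry of row `i` of `A ^ p` is positive. -/
noncomputable def expRow {n : ℕ} (A : Matrix (Fin n) (Fin n) ℝ) (i : Fin n) : ℕ :=
  sInf {p : ℕ | 0 < p ∧ ∀ j, 0 < (A ^ p) i j}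

/-- The digraph of `A` has an elementary cycle of length `k`. -/
def HasElemCycle {n : ℕ} (A : Matrix (Fin n) (Fin n) ℝ) (k : ℕ) : Prop :=
  0 < k ∧ ∃ c : ℕ → Fin n, c k = c 0 ∧
    (∀ i j, i < k → j < k → c i = c j → i = j) ∧
    ∀ i < k, A (c i) (c (i + 1)) = 1

/-- `m(U)`: the maximal length of a run of consecutive integers contained in `U`. -/
noncomputable def runMax (U : Set ℕ) : ℕ :=
  sSup {k : ℕ | ∃ a : ℕ, ∀ t < k, a + t ∈ U}

/-- The Frobenius number of a set `L`: the least `N` such that every `m ≥ N` is a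
nonnegative integer combination of elements of `L`. -/
noncomputable def frobNum (L : Set ℕ) : ℕ :=
  sInf {N : ℕ | ∀ m, N ≤ m → m ∈ AddSubmonoid.closure L}

/-- Irreducibility: for all `i j` there is a walk of some positive length from `i` to `j`. -/
def IsIrreducibleMat {n : ℕ} (A : Matrix (Fin n) (Fin n) ℝ) : Prop :=
  ∀ i j, ∃ k : ℕ, 0 < k ∧ 0 < (A ^ k) i j

/-!
Vertices are `0, …, n - 1` (vertex `0` is the paper's vertex 1). Every vertex `i < n - 1` of
`D(A)` has the single out-neighbour `i + 1`, so row `i` of `A ^ k` is the unit vector at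
`i + k` while `i + k ≤ n - 1`. Hence a closed walk at `0` of length `l` is the forced path
`0 → ⋯ → n - 1`, a closed walk at `n - 1` of length `l - n`, and the arc `n - 1 → 0`. A
closed walk at `n - 1` splits into cycles `n - 1 → j → ⋯ → n - 1` of length `n - j`, and
conversely a closed walk at any vertex passes through `n - 1` and may be started there. So
`(A ^ l) 0 0 > 0` iff `l ≥ n` and `l - n` lies in the monoid generated by the cycle lengths,
which primitivity makes cofinite.
-/

namespace Matrix

variable {ι κ μ R : Type*} [CommRing R] [LinearOrder R] [IsStrictOrderedRing R]

theorem mul_apply_pos_iff [Fintype κ] {B : Matrix ι κ R} {C : Matrix κ μ R}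
    (hB : ∀ i j, 0 ≤ B i j) (hC : ∀ i j, 0 ≤ C i j) (i : ι) (j : μ) :
    0 < (B * C) i j ↔ ∃ v, 0 < B i v ∧ 0 < C v j := by
  rw [mul_apply, Finset.sum_pos_iff_of_nonneg fun v _ => mul_nonneg (hB i v) (hC v j)]
  simp only [Finset.mem_univ, true_and]
  refine exists_congr fun v => ⟨fun h => ?_, fun h => mul_pos h.1 h.2⟩
  exact ⟨(hB i v).lt_of_ne fun h' => by simp [← h'] at h,
    (hC v j).lt_of_ne fun h' => by simp [← h'] at h⟩

variable [Fintype ι] [DecidableEq ι] {A : Matrix ι ι R}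

theorem pow_apply_pos_of_walk (hA : ∀ i j, 0 ≤ A i j) (c : ℕ → ι) :
    ∀ k, (∀ t < k, 0 < A (c t) (c (t + 1))) → 0 < (A ^ k) (c 0) (c k)
  | 0, _ => by simp
  | k + 1, hc => by
    rw [pow_succ, mul_apply_pos_iff (pow_apply_nonneg hA k) hA]
    exact ⟨c k, pow_apply_pos_of_walk hA c k fun t ht => hc t (by omega), hc k k.lt_succ_self⟩

theorem pow_apply_pos_of_le (hA : ∀ i j, 0 ≤ A i j) (hrow : ∀ i, ∃ j, 0 < A i j) {m : ℕ}
    (hm : ∀ i j, 0 < (A ^ m) i j) {l : ℕ} (hml : m ≤ l) (i j : ι) : 0 < (A ^ l) i j := by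
  induction l, hml using Nat.le_induction generalizing i with
  | base => exact hm i j
  | succ l _ ih =>
    obtain ⟨v, hv⟩ := hrow i
    rw [pow_succ', mul_apply_pos_iff hA (pow_apply_nonneg hA l)]
    exact ⟨v, hv, ih v⟩

end Matrix

theorem sInf_forall_ge_eq_add_sInf {P : ℕ → Prop} {S : Set ℕ} {n : ℕ} (hn : 0 < n)
    (hP : ∀ l, 0 < l → (P l ↔ n ≤ l ∧ l - n ∈ S))
    (hS : ∃ N, ∀ m, N ≤ m → m ∈ S) :
    sInf {k | 0 < k ∧ ∀ l, k ≤ l → P l} = n + sInf {N | ∀ m, N ≤ m → m ∈ S} := by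
  have hN₀ : sInf {N | ∀ m, N ≤ m → m ∈ S} ∈ {N | ∀ m, N ≤ m → m ∈ S} :=
    Nat.sInf_mem hS
  have hmem :
      n + sInf {N | ∀ m, N ≤ m → m ∈ S} ∈ {k | 0 < k ∧ ∀ l, k ≤ l → P l} :=
    ⟨by omega, fun l hl => (hP l (by omega)).2 ⟨by omega, hN₀ _ (by omega)⟩⟩
  refine le_antisymm (Nat.sInf_le hmem) (le_csInf ⟨_, hmem⟩ ?_)
  rintro k ⟨hk, hkP⟩
  have hnk : n ≤ k := ((hP k hk).1 (hkP k le_rfl)).1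
  have hle : sInf {N | ∀ m, N ≤ m → m ∈ S} ≤ k - n := Nat.sInf_le fun m hm => by
    simpa using ((hP (m + n) (by omega)).1 (hkP (m + n) (by omega))).2
  omega

namespace IsCompanion

variable {n : ℕ} {A : Matrix (Fin n) (Fin n) ℝ}

theorem nonneg (hA : IsCompanion A) (i j : Fin n) : 0 ≤ A i j := by
  rcases hA.1 i j with h | h <;> simp [h]

theorem apply_eq_zero (hA : IsCompanion A) {i j : Fin n} (hi : (i : ℕ) + 1 < n)
    (hj : (j : ℕ) ≠ i + 1) : A i j = 0 :=
  (hA.1 i j).resolve_right fun h => hj ((hA.2 i j hi).1 h)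

theorem mul_apply_of_lt (hA : IsCompanion A) (B : Matrix (Fin n) (Fin n) ℝ) {i : Fin n}
    (hi : (i : ℕ) + 1 < n) (j : Fin n) : (A * B) i j = B ⟨i + 1, hi⟩ j := by
  rw [Matrix.mul_apply, Finset.sum_eq_single ⟨i + 1, hi⟩, (hA.2 _ _ hi).2 rfl, one_mul]
  · intro v _ hv
    rw [hA.apply_eq_zero hi fun h => hv (Fin.ext h), zero_mul]
  · simp

theorem pow_add_apply (hA : IsCompanion A) (m : ℕ) :
    ∀ (k : ℕ) {i v : Fin n}, (v : ℕ) = i + k → ∀ j, (A ^ (k + m)) i j = (A ^ m) v j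
  | 0, i, v, hv, j => by rw [Fin.ext hv, zero_add]
  | k + 1, i, v, hv, j => by
    have hi : (i : ℕ) + 1 < n := by omega
    rw [add_right_comm, pow_succ', hA.mul_apply_of_lt _ hi]
    exact hA.pow_add_apply m k (by simp only; omega) j

theorem pow_apply_of_add_lt (hA : IsCompanion A) {i : Fin n} {k : ℕ} (h : (i : ℕ) + k < n)
    (j : Fin n) : (A ^ k) i j = if (j : ℕ) = i + k then 1 else 0 := by
  rw [← add_zero k, hA.pow_add_apply 0 k (v := ⟨i + k, h⟩) rfl, pow_zero, Matrix.one_apply]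
  simp only [Fin.ext_iff, add_zero, eq_comm]

theorem pow_apply_last_last_pos_of_pow_apply_self_pos (hA : IsCompanion A) (hn : 0 < n) {k : ℕ}
    (hk : 0 < k) {i : Fin n} (h : 0 < (A ^ k) i i) :
    0 < (A ^ k) ⟨n - 1, by omega⟩ ⟨n - 1, by omega⟩ := by
  obtain ⟨r, rfl⟩ : ∃ r, k = (n - 1 - i) + r := by
    refine ⟨k - (n - 1 - i), ?_⟩
    by_contra hlt
    rw [hA.pow_apply_of_add_lt (by omega), if_neg (by omega)] at h
    exact h.false
  rw [hA.pow_add_apply r _ (v := ⟨n - 1, by omega⟩) (by simp only; omega)] at h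
  rw [add_comm, pow_add, Matrix.mul_apply_pos_iff (Matrix.pow_apply_nonneg hA.nonneg r)
    (Matrix.pow_apply_nonneg hA.nonneg _)]
  refine ⟨i, h, ?_⟩
  rw [hA.pow_apply_of_add_lt (by omega), if_pos (by simp only; omega)]
  exact one_pos

theorem hasElemCycle_of_last_apply (hA : IsCompanion A) (hn : 0 < n) {j : Fin n}
    (hj : A ⟨n - 1, by omega⟩ j = 1) : HasElemCycle A (n - j) := by
  have hm : 0 < n - j := by omega
  refine ⟨hm, fun t => ⟨j + t % (n - j), by have := Nat.mod_lt t hm; omega⟩, ?_, ?_, ?_⟩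
  · simp only [Nat.mod_self, Nat.zero_mod]
  · intro a b ha hb h
    simpa [Fin.ext_iff, Nat.mod_eq_of_lt ha, Nat.mod_eq_of_lt hb] using h
  · intro t ht
    simp only [Nat.mod_eq_of_lt ht]
    rcases (Nat.succ_le_of_lt ht).lt_or_eq with h | h
    · simp only [Nat.mod_eq_of_lt h]
      exact (hA.2 _ _ (by simp only; omega)).2 (by simp only; omega)
    · convert hj using 2
      · ext; simp only; omega
      · ext; simp only [show t + 1 = n - j from h, Nat.mod_self, add_zero]

theorem pow_apply_last_last_pos_iff (hA : IsCompanion A) (hn : 0 < n) (l : ℕ) :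
    0 < (A ^ l) ⟨n - 1, by omega⟩ ⟨n - 1, by omega⟩ ↔
      l ∈ AddSubmonoid.closure {k | HasElemCycle A k} := by
  have hpow := Matrix.pow_apply_nonneg hA.nonneg
  constructor
  · induction l using Nat.strong_induction_on with
    | _ l ih =>
      rcases l with _ | l
      · exact fun _ => zero_mem _
      intro hpos
      rw [pow_succ', Matrix.mul_apply_pos_iff hA.nonneg (hpow l)] at hpos
      obtain ⟨j, hj, hjl⟩ := hpos
      -- a walk from `j` reaches `n - 1` only after the forced path of length `n - 1 - j`
      obtain ⟨r, rfl⟩ : ∃ r, l = (n - 1 - j) + r := by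
        refine ⟨l - (n - 1 - j), ?_⟩
        by_contra hlt
        rw [hA.pow_apply_of_add_lt (by omega), if_neg (by simp only; omega)] at hjl
        exact hjl.false
      rw [hA.pow_add_apply r _ (v := ⟨n - 1, by omega⟩) (by simp only; omega)] at hjl
      have hcyc := hA.hasElemCycle_of_last_apply hn ((hA.1 _ _).resolve_left hj.ne')
      rw [show n - 1 - j + r + 1 = (n - j) + r by omega]
      exact add_mem (AddSubmonoid.subset_closure hcyc) (ih r (by omega) hjl)
  · intro hl
    induction hl using AddSubmonoid.closure_induction with
    | mem k hk =>
      obtain ⟨hk0, c, hck, -, hc⟩ := hk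
      have hwalk := Matrix.pow_apply_pos_of_walk hA.nonneg c k fun t ht => (hc t ht) ▸ one_pos
      exact hA.pow_apply_last_last_pos_of_pow_apply_self_pos hn hk0 (hck ▸ hwalk)
    | zero => simp
    | add x y _ _ hx hy =>
      rw [pow_add, Matrix.mul_apply_pos_iff (hpow x) (hpow y)]
      exact ⟨_, hx, hy⟩

theorem pow_apply_zero_zero_pos_iff (hA : IsCompanion A) (hn : 0 < n)
    (h1 : A ⟨n - 1, by omega⟩ ⟨0, hn⟩ = 1) {l : ℕ} (hl : 0 < l) :
    0 < (A ^ l) ⟨0, hn⟩ ⟨0, hn⟩ ↔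
      n ≤ l ∧ 0 < (A ^ (l - n)) ⟨n - 1, by omega⟩ ⟨n - 1, by omega⟩ := by
  by_cases hnl : n ≤ l
  · obtain ⟨r, rfl⟩ : ∃ r, l = (n - 1) + (r + 1) := ⟨l - n, by omega⟩
    rw [hA.pow_add_apply _ _ (v := ⟨n - 1, by omega⟩) (by simp), pow_succ,
      Matrix.mul_apply_pos_iff (Matrix.pow_apply_nonneg hA.nonneg r) hA.nonneg,
      show n - 1 + (r + 1) - n = r by omega]
    refine ⟨fun ⟨v, hr, hv⟩ => ⟨hnl, ?_⟩, fun h => ⟨_, h.2, h1 ▸ one_pos⟩⟩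
    -- only vertex `n - 1` has an arc into `0`
    have hv : v = ⟨n - 1, by omega⟩ := by
      by_contra hne
      have : (v : ℕ) ≠ n - 1 := fun h => hne (Fin.ext h)
      exact hv.ne' (hA.apply_eq_zero (by omega) (by simp))
    exact hv ▸ hr
  · rw [hA.pow_apply_of_add_lt (by simp only; omega), if_neg (by simp only; omega)]
    simp [hnl]

theorem exists_forall_pow_apply_last_last_pos (hA : IsCompanion A) (hn : 0 < n)
    (h1 : A ⟨n - 1, by omega⟩ ⟨0, hn⟩ = 1) (hP : _root_.IsPrimitive A) :
    ∃ N, ∀ l, N ≤ l → 0 < (A ^ l) ⟨n - 1, by omega⟩ ⟨n - 1, by omega⟩ := by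
  obtain ⟨m, -, hm⟩ := hP
  have hrow (i : Fin n) : ∃ j, 0 < A i j := by
    by_cases hi : (i : ℕ) + 1 < n
    · exact ⟨⟨i + 1, hi⟩, by rw [(hA.2 _ _ hi).2 rfl]; exact one_pos⟩
    · have hlast : i = ⟨n - 1, by omega⟩ := Fin.ext (show (i : ℕ) = n - 1 by omega)
      exact ⟨⟨0, hn⟩, hlast ▸ h1 ▸ one_pos⟩
  exact ⟨m, fun l hl => Matrix.pow_apply_pos_of_le hA.nonneg hrow hm hl _ _⟩

end IsCompanion

theorem stmt11 {n : ℕ} (hn : 3 ≤ n) (A : Matrix (Fin n) (Fin n) ℝ)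
    (hA : IsCompanion A) (hP : _root_.IsPrimitive A)
    (h1 : A ⟨n - 1, by omega⟩ ⟨0, by omega⟩ = 1) :
    expIJ A ⟨0, by omega⟩ ⟨0, by omega⟩ = n + frobNum {k : ℕ | HasElemCycle A k} := by
  have hn₀ : 0 < n := by omega
  obtain ⟨N, hN⟩ := hA.exists_forall_pow_apply_last_last_pos hn₀ h1 hP
  refine sInf_forall_ge_eq_add_sInf hn₀ (fun l hl => ?_)
    ⟨N, fun m hm => (hA.pow_apply_last_last_pos_iff hn₀ m).1 (hN m hm)⟩
  rw [hA.pow_apply_zero_zero_pos_iff hn₀ h1 hl, hA.pow_apply_last_last_pos_iff hn₀]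
  rfl
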